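/- Let R be a commutative Noetherian ring, M a finitely generated R-module, N a proper submodule with a regular prime extension filtration N = M₀ ⊂^{p₁} M₁ ⊂ ⋯ ⊂^{pₙ} Mₙ = M. Then for every 1 ≤ i ≤ n, M_i = {x ∈ M : p₁⋯p_i • x ⊆ N} = (N :_M p₁⋯p_i). -/

import Mathlib

variable {R : Type*} [CommRing R] {M : Type*} [AddCommGroup M] [Module R M]

/-- The colon submodule `(N :_M I) = {x ∈ M | I • x ⊆ N}`. -/
def colonSubmodule (N : Submodule R M) (I : Ideal R) : Submodule R M where
  carrier := {x | ∀ a ∈ I, a • x ∈ N}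
  add_mem' := fun hx hy a ha => by simpa [smul_add] using N.add_mem (hx a ha) (hy a ha)
  zero_mem' := fun a _ => by simp
  smul_mem' := fun c x hx a ha => by
    rw [smul_comm]
    exact N.smul_mem c (hx a ha)

/-- `K` is a `p`-prime extension of `N`, i.e. `N` is a `p`-prime submodule of `K`. -/
def IsPrimeExt (p : Ideal R) (N K : Submodule R M) : Prop :=
  N < K ∧ N.colon K = p ∧ ∀ a : R, ∀ x ∈ K, a • x ∈ N → x ∈ N ∨ a ∈ p

/-- The associated primes of `T / N` for submodules `N ≤ T ≤ M`. -/
def assOf (R : Type*) {M : Type*} [CommRing R] [AddCommGroup M] [Module R M]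
    (N T : Submodule R M) : Set (Ideal R) :=
  associatedPrimes R ↥(T.map N.mkQ)

/-- `K` is a maximal `p`-prime extension of `N` inside `T`. -/
def IsMaximalPrimeExtIn (T : Submodule R M) (p : Ideal R) (N K : Submodule R M) : Prop :=
  K ≤ T ∧ IsPrimeExt p N K ∧ ∀ L ≤ T, IsPrimeExt p N L → ¬ K < L

/-- `K` is a regular `p`-prime extension of `N` inside `T`: a maximal `p`-prime
extension where `p` is a maximal element of `Ass (T/N)`. -/
def IsRegularPrimeExtIn (T : Submodule R M) (p : Ideal R) (N K : Submodule R M) : Prop :=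
  IsMaximalPrimeExtIn T p N K ∧ Maximal (· ∈ assOf R N T) p

/-- A regular prime extension (RPE) filtration inside `T` with primes `p i`. -/
def IsRPEFiltrationIn (T : Submodule R M) {n : ℕ}
    (F : Fin (n + 1) → Submodule R M) (p : Fin n → Ideal R) : Prop :=
  ∀ i : Fin n, IsRegularPrimeExtIn T (p i) (F i.castSucc) (F i.succ)

/-- The generalized prime ideal factorization of `N` in `T` is given by the multiset `s`:
there is an RPE filtration of `T` over `N` whose multiset of primes is `s`. -/
def HasGPIF (N T : Submodule R M) (s : Multiset (Ideal R)) : Prop :=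
  ∃ (n : ℕ) (F : Fin (n + 1) → Submodule R M) (p : Fin n → Ideal R),
    F 0 = N ∧ F (Fin.last n) = T ∧ IsRPEFiltrationIn T F p ∧ (List.ofFn p : Multiset (Ideal R)) = s

/-! If `q` is maximal among the associated primes of `M/N`, then `(N :_M q)` is itself a
`q`-prime extension of `N`: for `z ∈ (N :_M q) \ N` the annihilator of `z̄` contains `q` and lies
in some associated prime, so it equals `q` by maximality. Every `q`-prime extension of `N` lies in
`(N :_M q)`, hence the maximal one is `(N :_M q)`, i.e. `Mᵢ = (Mᵢ₋₁ :_M pᵢ)`, and the identity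
`(N :_M IJ) = ((N :_M I) :_M J)` telescopes along the filtration. -/

variable {N : Submodule R M} {q : Ideal R}

lemma le_colonSubmodule (N : Submodule R M) (I : Ideal R) : N ≤ colonSubmodule N I :=
  fun _ hx a _ => N.smul_mem a hx

@[simp]
lemma colonSubmodule_top (N : Submodule R M) : colonSubmodule N ⊤ = N :=
  le_antisymm (fun x hx => by simpa using hx 1 Submodule.mem_top) (le_colonSubmodule N ⊤)

lemma colonSubmodule_mul (N : Submodule R M) (I J : Ideal R) :
    colonSubmodule N (I * J) = colonSubmodule (colonSubmodule N I) J := by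
  ext x
  refine ⟨fun h b hb a ha => ?_, fun h c hc => ?_⟩
  · rw [← mul_smul]
    exact h (a * b) (Ideal.mul_mem_mul ha hb)
  · refine Submodule.mul_induction_on hc (fun a ha b hb => ?_) (fun y z hy hz => ?_)
    · rw [mul_smul]
      exact h b hb a ha
    · rw [add_smul]
      exact N.add_mem hy hz

lemma eq_colonSubmodule_prod_of_succ {n : ℕ} {F : Fin (n + 1) → Submodule R M}
    {p : Fin n → Ideal R} (hF : ∀ i, F i.succ = colonSubmodule (F i.castSucc) (p i))
    (i : Fin (n + 1)) :
    F i = colonSubmodule (F 0) (∏ j ∈ Finset.univ.filter (fun j => j.castSucc < i), p j) := by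
  induction i using Fin.induction with
  | zero => simp
  | succ i ih =>
    have hfilter : Finset.univ.filter (fun j : Fin n => j.castSucc < i.succ) =
        insert i (Finset.univ.filter (fun j => j.castSucc < i.castSucc)) := by
      ext j
      simp [Fin.castSucc_lt_succ_iff, le_iff_lt_or_eq, or_comm]
    rw [hF, ih, hfilter, Finset.prod_insert (by simp), mul_comm, colonSubmodule_mul]

lemma IsPrimeExt.le_colonSubmodule {K : Submodule R M} (h : IsPrimeExt q N K) :
    K ≤ colonSubmodule N q := fun y hy a ha =>
  Submodule.mem_colon.1 (h.2.1 ▸ ha : a ∈ N.colon K) y hy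

lemma colon_bot_singleton_mkQ (N : Submodule R M) (x : M) :
    (⊥ : Submodule R (M ⧸ N)).colon {N.mkQ x} = N.colon {x} := by
  ext r
  rw [Submodule.mem_colon_singleton, Submodule.mem_colon_singleton, Submodule.mem_bot,
    Submodule.mkQ_apply, ← Submodule.Quotient.mk_smul, Submodule.Quotient.mk_eq_zero]

lemma isAssociatedPrime_quotient_iff :
    IsAssociatedPrime q (M ⧸ N) ↔ N.IsAssociatedPrime q := by
  simp only [IsAssociatedPrime, Submodule.isAssociatedPrime_def, N.mkQ_surjective.exists,
    colon_bot_singleton_mkQ]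

lemma assOf_top (N : Submodule R M) : assOf R N ⊤ = N.associatedPrimes := by
  have e : ↥((⊤ : Submodule R M).map N.mkQ) ≃ₗ[R] M ⧸ N :=
    (LinearEquiv.ofEq _ _ (by rw [Submodule.map_top, Submodule.range_mkQ])).trans
      Submodule.topEquiv
  ext q
  rw [assOf, LinearEquiv.AssociatedPrimes.eq e]
  exact isAssociatedPrime_quotient_iff

section Noetherian

variable [IsNoetherianRing R]

lemma exists_colon_singleton_le_mem_associatedPrimes {x : M} (hx : x ∉ N) :
    ∃ P ∈ N.associatedPrimes, N.colon {x} ≤ P := by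
  obtain ⟨P, hP, hle⟩ := exists_le_isAssociatedPrime_of_isNoetherianRing R (N.mkQ x)
    (by simpa [Submodule.Quotient.mk_eq_zero] using hx)
  exact ⟨P, isAssociatedPrime_quotient_iff.1 hP, colon_bot_singleton_mkQ N x ▸ hle⟩

lemma colon_singleton_eq_of_maximal (hq : Maximal (· ∈ N.associatedPrimes) q) {x : M}
    (hx : x ∉ N) (hle : q ≤ N.colon {x}) : N.colon {x} = q := by
  obtain ⟨P, hP, hxP⟩ := exists_colon_singleton_le_mem_associatedPrimes hx
  exact le_antisymm (hq.eq_of_ge hP (hle.trans hxP) ▸ hxP) hle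

lemma isPrimeExt_colonSubmodule (hq : Maximal (· ∈ N.associatedPrimes) q) :
    IsPrimeExt q N (colonSubmodule N q) := by
  obtain ⟨hprime, x, rfl⟩ := Submodule.isAssociatedPrime_iff.1 hq.prop
  have hxq : x ∈ colonSubmodule N (N.colon {x}) := fun a ha => Submodule.mem_colon_singleton.1 ha
  have hxN : x ∉ N := fun hxN => hprime.ne_top (by simp [hxN])
  refine ⟨(le_colonSubmodule N _).lt_of_ne fun h => hxN (h ▸ hxq), ?_, ?_⟩
  · refine le_antisymm (fun r hr => ?_) fun r hr => Submodule.mem_colon.2 fun y hy => hy r hr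
    exact Submodule.mem_colon_singleton.2 (Submodule.mem_colon.1 hr x hxq)
  · intro a z hz haz
    by_cases hzN : z ∈ N
    · exact Or.inl hzN
    · have hle : N.colon {x} ≤ N.colon {z} := fun r hr =>
        Submodule.mem_colon_singleton.2 (hz r hr)
      exact Or.inr <|
        colon_singleton_eq_of_maximal hq hzN hle ▸ Submodule.mem_colon_singleton.2 haz

lemma IsRegularPrimeExtIn.eq_colonSubmodule {K : Submodule R M}
    (h : IsRegularPrimeExtIn ⊤ q N K) : K = colonSubmodule N q := by
  obtain ⟨⟨-, hK, hKmax⟩, hq⟩ := h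
  rw [assOf_top] at hq
  exact hK.le_colonSubmodule.lt_or_eq.resolve_left
    (hKmax _ le_top (isPrimeExt_colonSubmodule hq))

end Noetherian

theorem rpe_filtration_terms_eq_colon_general {R : Type*} [CommRing R] [IsNoetherianRing R]
    {M : Type*} [AddCommGroup M] [Module R M]
    {n : ℕ} (N : Submodule R M)
    (F : Fin (n + 1) → Submodule R M) (p : Fin n → Ideal R)
    (h0 : F 0 = N)
    (hF : IsRPEFiltrationIn ⊤ F p) :
    ∀ i : Fin n,
      F i.succ = colonSubmodule N (∏ j ∈ Finset.univ.filter (fun j => j ≤ i), p j) := by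
  intro i
  rw [eq_colonSubmodule_prod_of_succ (fun j => (hF j).eq_colonSubmodule) i.succ, h0]
  simp only [Fin.castSucc_lt_succ_iff]

/-- In an RPE filtration `N = F 0 ⊂^{p 0} F 1 ⊂ ⋯ ⊂ F n = M`, each term `F (i+1)`
equals the colon submodule `(N :_M p 0 ⋯ p i)`. -/
theorem rpe_filtration_terms_eq_colon {R : Type*} [CommRing R] [IsNoetherianRing R]
    {M : Type*} [AddCommGroup M] [Module R M] [Module.Finite R M]
    {n : ℕ} (N : Submodule R M) (hN : N ≠ ⊤)
    (F : Fin (n + 1) → Submodule R M) (p : Fin n → Ideal R)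
    (h0 : F 0 = N) (hlast : F (Fin.last n) = ⊤)
    (hF : IsRPEFiltrationIn ⊤ F p) :
    ∀ i : Fin n,
      F i.succ = colonSubmodule N (∏ j ∈ Finset.univ.filter (fun j => j ≤ i), p j) :=
  rpe_filtration_terms_eq_colon_general N F p h0 hF
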